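/- If C is a chain complex of A-modules that is R-finitely dominated (R a subring of A) and h : C → C is any self chain map, then the algebraic mapping torus T(h) is R[x,x⁻¹]-finitely dominated; moreover if C is homotopy equivalent over R to a strict R-perfect complex D via f : C → D, g : D → C, then T(h) is homotopy equivalent to the strict R[x,x⁻¹]-perfect complex T(f∘h∘g). -/

import Mathlib

open CategoryTheory LaurentPolynomial

/-- Degreewise scalar multiplication by `a` as a chain self-map. -/
def smulChainMap {A : Type*} [CommRing A] {ι : Type*} {c : ComplexShape ι} (a : A)
    (K : HomologicalComplex (ModuleCat A) c) : K ⟶ K where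
  f n := ModuleCat.ofHom (a • LinearMap.id)
  comm' := by
    intro i j _
    ext x
    show (K.d i j).hom (a • x) = a • (K.d i j).hom x
    exact (K.d i j).hom.map_smul a x

/-- The algebraic mapping torus `T(h) = Cone(h⊗1 − 1⊗x : C ⊗_R R[x,x⁻¹] → C ⊗_R R[x,x⁻¹])`
of a self-map `h` of a complex of `R`-modules. -/
noncomputable def mappingTorus {R : Type*} [CommRing R] {C : CochainComplex (ModuleCat R) ℤ}
    (h : C ⟶ C) : CochainComplex (ModuleCat (LaurentPolynomial R)) ℤ :=
  CochainComplex.mappingCone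
    (((ModuleCat.extendScalars (algebraMap R (LaurentPolynomial R))).mapHomologicalComplex
        (ComplexShape.up ℤ)).map h - smulChainMap (T 1) _)

/-!
If `f : C → D` is a homotopy equivalence with homotopy inverse `g`, then `f` carries `h` to
`f ∘ h ∘ g` up to homotopy: `f ∘ h ≃ f ∘ h ∘ (g ∘ f)`. Base change along `R → R[x,x⁻¹]` is
additive, so it preserves homotopy equivalences and this homotopy-commutative square; hence the
squares defining `T(h)` and `T(f ∘ h ∘ g)` as mapping cones are related by homotopy equivalences,
and the mapping cones are homotopy equivalent because the homotopy category is triangulated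
(Mather's trick). Degreewise `T(f ∘ h ∘ g)ⁿ = (R[x,x⁻¹] ⊗ Dⁿ⁺¹) ⊕ (R[x,x⁻¹] ⊗ Dⁿ)`, which is
bounded, finitely generated and projective whenever `D` is.
-/

universe u v

open TensorProduct

namespace ModuleCat

variable {R S : Type u} [CommRing R] [CommRing S]

instance extendScalars_additive (f : R →+* S) : (extendScalars.{u, u, max u v} f).Additive :=
  (extendRestrictScalarsAdj f).left_adjoint_additive

variable [Algebra R S] (M : ModuleCat.{max u v} R)

noncomputable def restrictScalarsSelfEquiv :
    (restrictScalars (algebraMap R S)).obj (of S S) ≃ₗ[R] S :=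
  AddEquiv.toLinearEquiv (AddEquiv.refl S) fun r x =>
    (Algebra.smul_def r ((AddEquiv.refl S) x)).symm

noncomputable def extendScalarsObjEquivTensor :
    (extendScalars (algebraMap R S)).obj M ≃ₗ[S] S ⊗[R] M :=
  AddEquiv.toLinearEquiv
    (TensorProduct.congr restrictScalarsSelfEquiv (LinearEquiv.refl R M)).toAddEquiv fun s x => by
      induction x using TensorProduct.induction_on with
      | zero => exact (map_zero _).trans (smul_zero s).symm
      | tmul s' m =>
          erw [ExtendScalars.smul_tmul]
          exact (TensorProduct.smul_tmul' (R := R) (M := S) (N := M) s s' m).symm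
      | add x y hx hy => erw [smul_add, map_add, hx, hy, map_add, smul_add]

instance extendScalars_subsingleton [Subsingleton M] :
    Subsingleton ((extendScalars (algebraMap R S)).obj M) :=
  (extendScalarsObjEquivTensor M).toEquiv.subsingleton

instance extendScalars_finite [Module.Finite R M] :
    Module.Finite S ((extendScalars (algebraMap R S)).obj M) :=
  Module.Finite.equiv (extendScalarsObjEquivTensor M).symm

instance extendScalars_projective [Module.Projective R M] :
    Module.Projective S ((extendScalars (algebraMap R S)).obj M) :=
  Module.Projective.of_equiv (extendScalarsObjEquivTensor M).symm

end ModuleCat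

namespace CochainComplex

variable {V : Type*} [Category V] [Preadditive V] [Limits.HasBinaryBiproducts V]
    [Limits.HasZeroObject V]

noncomputable def mappingConeHomotopyEquiv {K₁ L₁ K₂ L₂ : CochainComplex V ℤ}
    (φ₁ : K₁ ⟶ L₁) (φ₂ : K₂ ⟶ L₂) (e₁ : HomotopyEquiv K₁ K₂) (e₂ : HomotopyEquiv L₁ L₂)
    (H : Homotopy (φ₁ ≫ e₂.hom) (e₁.hom ≫ φ₂)) :
    HomotopyEquiv (mappingCone φ₁) (mappingCone φ₂) :=
  HomotopyCategory.homotopyEquivOfIso <| Pretriangulated.Triangle.π₃.mapIso <|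
    Pretriangulated.isoTriangleOfIso₁₂ _ _
      (HomotopyCategory.mappingCone_triangleh_distinguished φ₁)
      (HomotopyCategory.mappingCone_triangleh_distinguished φ₂)
      (HomotopyCategory.isoOfHomotopyEquiv e₁) (HomotopyCategory.isoOfHomotopyEquiv e₂) <| by
        change (HomotopyCategory.quotient _ _).map φ₁ ≫ (HomotopyCategory.quotient _ _).map e₂.hom =
          (HomotopyCategory.quotient _ _).map e₁.hom ≫ (HomotopyCategory.quotient _ _).map φ₂
        rw [← Functor.map_comp, ← Functor.map_comp]
        exact HomotopyCategory.eq_of_homotopy _ _ H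

end CochainComplex

lemma smulChainMap_naturality {A : Type*} [CommRing A] {ι : Type*} {c : ComplexShape ι} (a : A)
    {K L : HomologicalComplex (ModuleCat A) c} (ψ : K ⟶ L) :
    smulChainMap a K ≫ ψ = ψ ≫ smulChainMap a L := by
  ext n x
  exact (ψ.f n).hom.map_smul a x

def Homotopy.subCompOfComm {V : Type*} [Category V] [Preadditive V] {ι : Type*}
    {c : ComplexShape ι} {K L : HomologicalComplex V c} {f₁ s₁ : K ⟶ K} {f₂ s₂ : L ⟶ L}
    {g : K ⟶ L} (H : Homotopy (f₁ ≫ g) (g ≫ f₂)) (hs : s₁ ≫ g = g ≫ s₂) :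
    Homotopy ((f₁ - s₁) ≫ g) (g ≫ (f₂ - s₂)) :=
  (Homotopy.ofEq (by rw [Preadditive.sub_comp, sub_eq_add_neg])).trans <|
    (H.add (Homotopy.ofEq (congrArg Neg.neg hs))).trans <|
      Homotopy.ofEq (by rw [Preadditive.comp_sub, sub_eq_add_neg])

def HomotopyEquiv.homotopyCompHomConj {V : Type*} [Category V] [Preadditive V] {ι : Type*}
    {c : ComplexShape ι} {K L : HomologicalComplex V c} (e : HomotopyEquiv K L) (h : K ⟶ K) :
    Homotopy (h ≫ e.hom) (e.hom ≫ e.inv ≫ h ≫ e.hom) :=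
  (Homotopy.ofEq (Category.id_comp _).symm).trans
    ((e.homotopyHomInvId.symm.compRight _).trans (Homotopy.ofEq (by simp)))

def IsStrictPerfect {R : Type*} [CommRing R] (K : CochainComplex (ModuleCat R) ℤ) : Prop :=
  (∃ a b : ℤ, ∀ n, n < a ∨ b < n → Subsingleton (K.X n)) ∧
    (∀ n, Module.Finite R (K.X n)) ∧ ∀ n, Module.Projective R (K.X n)

namespace mappingTorus

variable {R : Type u} [CommRing R]

noncomputable def homotopyEquiv {C₁ C₂ : CochainComplex (ModuleCat.{max u v} R) ℤ}
    (h₁ : C₁ ⟶ C₁) (h₂ : C₂ ⟶ C₂) (e : HomotopyEquiv C₁ C₂)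
    (H : Homotopy (h₁ ≫ e.hom) (e.hom ≫ h₂)) :
    HomotopyEquiv (mappingTorus h₁) (mappingTorus h₂) :=
  let F := ModuleCat.extendScalars (algebraMap R (LaurentPolynomial R))
  CochainComplex.mappingConeHomotopyEquiv _ _ (F.mapHomotopyEquiv e) (F.mapHomotopyEquiv e) <|
    Homotopy.subCompOfComm
      ((Homotopy.ofEq (Functor.map_comp _ _ _).symm).trans <|
        (F.mapHomotopy H).trans (Homotopy.ofEq (Functor.map_comp _ _ _)))
      (smulChainMap_naturality _ _)

variable {D : CochainComplex (ModuleCat.{max u v} R) ℤ}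

noncomputable def XEquivProd (ψ : D ⟶ D) (n : ℤ) :
    (mappingTorus ψ).X n ≃ₗ[LaurentPolynomial R]
      (ModuleCat.extendScalars (algebraMap R (LaurentPolynomial R))).obj (D.X (n + 1)) ×
        (ModuleCat.extendScalars (algebraMap R (LaurentPolynomial R))).obj (D.X n) :=
  (HomologicalComplex.homotopyCofiber.XIsoBiprod
      (((ModuleCat.extendScalars (algebraMap R (LaurentPolynomial R))).mapHomologicalComplex
        (ComplexShape.up ℤ)).map ψ - smulChainMap (T 1) _) n (n + 1) (by simp) ≪≫
    ModuleCat.biprodIsoProd _ _).toLinearEquiv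

lemma isStrictPerfect (ψ : D ⟶ D) (hD : IsStrictPerfect D) :
    IsStrictPerfect (mappingTorus ψ) := by
  obtain ⟨⟨a, b, hbd⟩, hfg, hproj⟩ := hD
  refine ⟨⟨a - 1, b, fun n hn => ?_⟩, fun n => ?_, fun n => ?_⟩
  · have := hbd (n + 1) (by omega)
    have := hbd n (by omega)
    exact (XEquivProd ψ n).toEquiv.subsingleton
  · exact Module.Finite.equiv (XEquivProd ψ n).symm
  · exact Module.Projective.of_equiv (XEquivProd ψ n).symm

end mappingTorus

theorem stmt9 (R A : Type) [CommRing R] [CommRing A] [Algebra R A]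
    (C : CochainComplex (ModuleCat A) ℤ) (h : C ⟶ C)
    (D : CochainComplex (ModuleCat R) ℤ)
    (a b : ℤ) (hbd : ∀ n, n < a ∨ b < n → Subsingleton (D.X n))
    (hfg : ∀ n, Module.Finite R (D.X n)) (hproj : ∀ n, Module.Projective R (D.X n))
    (e : HomotopyEquiv
      (((ModuleCat.restrictScalars (algebraMap R A)).mapHomologicalComplex
        (ComplexShape.up ℤ)).obj C) D) :
    -- `T(f ∘ h ∘ g)` is strict `R[x,x⁻¹]`-perfect …
    ((∃ a' b' : ℤ, ∀ n, n < a' ∨ b' < n →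
        Subsingleton ((mappingTorus (e.inv ≫
          ((ModuleCat.restrictScalars (algebraMap R A)).mapHomologicalComplex
            (ComplexShape.up ℤ)).map h ≫ e.hom)).X n)) ∧
      (∀ n, Module.Finite (LaurentPolynomial R)
        ((mappingTorus (e.inv ≫
          ((ModuleCat.restrictScalars (algebraMap R A)).mapHomologicalComplex
            (ComplexShape.up ℤ)).map h ≫ e.hom)).X n)) ∧
      (∀ n, Module.Projective (LaurentPolynomial R)
        ((mappingTorus (e.inv ≫
          ((ModuleCat.restrictScalars (algebraMap R A)).mapHomologicalComplex
            (ComplexShape.up ℤ)).map h ≫ e.hom)).X n))) ∧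
    -- … and `T(h)` is homotopy equivalent to it; in particular `T(h)` is
    -- `R[x,x⁻¹]`-finitely dominated.
    Nonempty (HomotopyEquiv
      (mappingTorus (R := R) (((ModuleCat.restrictScalars (algebraMap R A)).mapHomologicalComplex
        (ComplexShape.up ℤ)).map h))
      (mappingTorus (e.inv ≫
        ((ModuleCat.restrictScalars (algebraMap R A)).mapHomologicalComplex
          (ComplexShape.up ℤ)).map h ≫ e.hom))) := by
  have hD : IsStrictPerfect D := ⟨⟨a, b, hbd⟩, hfg, hproj⟩
  exact ⟨mappingTorus.isStrictPerfect _ hD,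
    ⟨mappingTorus.homotopyEquiv _ _ e (e.homotopyCompHomConj _)⟩⟩
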